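/- For every m ≥ 0, ε > 0, and every (x, t) ∈ εℤ² with t ≥ 0, one has ã₁(x, t, m, ε) = ã₁(−x, t, m, ε). -/

import Mathlib

open Complex Real Filter Asymptotics

noncomputable section

/-- Number of turns of the checker path with `T` moves whose set of indices of
rightward moves (among moves `0, …, T-1`) is `R`. -/
def turnsOf (T : ℕ) (R : Finset ℕ) : ℕ :=
  ((Finset.Ico 1 T).filter fun i => ¬((i ∈ R) ↔ (i - 1 ∈ R))).card

/-- The Feynman-checkers wave function on the integer lattice, with `μ = m·ε`:
`waveA X T μ = a(X·ε, T·ε, m, ε)`.  A checker path from `(0,0)` to `(X·ε, T·ε)`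
consists of `T` moves, each `(ε,ε)` ("right") or `(-ε,ε)` ("left"); it is
determined by the set `R ⊆ {0,…,T-1}` of indices of its rightward moves.  The
path ends at `X·ε` iff `R.card - (T - R.card) = X`, and its second point is
`(ε,ε)` iff `0 ∈ R`. -/
def waveA (X : ℤ) (T : ℕ) (μ : ℝ) : ℂ :=
  (((1 + μ ^ 2) ^ ((1 - (T : ℝ)) / 2) : ℝ) : ℂ) * Complex.I *
    ∑ R ∈ (Finset.range T).powerset,
      if 0 ∈ R ∧ 2 * (R.card : ℤ) - (T : ℤ) = X then
        (-Complex.I * (μ : ℂ)) ^ turnsOf T R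
      else 0

/-- The wave function `a(x, t, m, ε)` for lattice points `(x,t) ∈ εℤ²`. -/
def wf (x t m ε : ℝ) : ℂ := waveA ⌊x / ε⌋ ⌊t / ε⌋.toNat (m * ε)

/-- `ã₁(x, t, m, ε) = Re a(x, t+ε, m, ε)`. -/
def a1 (x t m ε : ℝ) : ℝ := (wf x (t + ε) m ε).re

/-- `ã₂(x, t, m, ε) = Im a(x+ε, t+ε, m, ε)`. -/
def a2 (x t m ε : ℝ) : ℝ := (wf (x + ε) (t + ε) m ε).im

end

/-!
Reversing the order of the moves of a checker path and swapping left and right maps the paths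
ending at `x` bijectively onto those ending at `-x` and preserves the number of turns. Since
`a = c · i · Σ (-imε)^turns` with `c` real, `Re a = -c · Im Σ`, and only paths with an odd number
of turns contribute to `Im Σ`. A path has an odd number of turns exactly when its first and last
moves differ, so for these paths the bijection also preserves the condition that the first move
goes to the right.
-/

-- The rightward moves of the reversed path with left and right swapped.
def reverseFlip (T : ℕ) (R : Finset ℕ) : Finset ℕ :=
  (Finset.range T).filter fun i => T - 1 - i ∉ R

lemma mem_reverseFlip {T i : ℕ} {R : Finset ℕ} :
    i ∈ reverseFlip T R ↔ i < T ∧ T - 1 - i ∉ R := by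
  simp [reverseFlip]

lemma reverseFlip_subset (T : ℕ) (R : Finset ℕ) : reverseFlip T R ⊆ Finset.range T :=
  Finset.filter_subset _ _

lemma reverseFlip_reverseFlip {T : ℕ} {R : Finset ℕ} (hR : R ⊆ Finset.range T) :
    reverseFlip T (reverseFlip T R) = R := by
  ext i
  have hi : i ∈ R → i < T := fun h => Finset.mem_range.mp (hR h)
  simp only [mem_reverseFlip, not_and, not_not]
  constructor
  · rintro ⟨hiT, h⟩
    simpa [show T - 1 - (T - 1 - i) = i by omega] using h (by omega)
  · intro h
    exact ⟨hi h, fun _ => by simpa [show T - 1 - (T - 1 - i) = i by have := hi h; omega]⟩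

lemma reverseFlip_eq_image {T : ℕ} (R : Finset ℕ) :
    reverseFlip T R = (Finset.range T \ R).image (T - 1 - ·) := by
  ext i
  simp only [mem_reverseFlip, Finset.mem_image, Finset.mem_sdiff, Finset.mem_range]
  constructor
  · rintro ⟨hi, h⟩
    exact ⟨T - 1 - i, ⟨by omega, h⟩, by omega⟩
  · rintro ⟨j, ⟨hj, h⟩, rfl⟩
    exact ⟨by omega, by rwa [show T - 1 - (T - 1 - j) = j by omega]⟩

lemma card_reverseFlip {T : ℕ} {R : Finset ℕ} (hR : R ⊆ Finset.range T) :
    (reverseFlip T R).card = T - R.card := by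
  rw [reverseFlip_eq_image, Finset.card_image_of_injOn, Finset.card_sdiff_of_subset hR,
    Finset.card_range]
  intro i hi j hj h
  simp only [Finset.coe_sdiff, Set.mem_sdiff, Finset.mem_coe, Finset.mem_range] at hi hj h
  omega

lemma reverseFlip_turn_iff {T i : ℕ} (R : Finset ℕ) (hi : 1 ≤ i ∧ i < T) :
    (i ∈ reverseFlip T R ↔ i - 1 ∈ reverseFlip T R) ↔ (T - i ∈ R ↔ T - i - 1 ∈ R) := by
  simp only [mem_reverseFlip, hi.2, show i - 1 < T by omega, true_and,
    show T - 1 - i = T - i - 1 by omega, show T - 1 - (i - 1) = T - i by omega]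
  tauto

lemma turnsOf_reverseFlip (T : ℕ) (R : Finset ℕ) : turnsOf T (reverseFlip T R) = turnsOf T R := by
  refine Finset.card_nbij' (T - ·) (T - ·) (fun i hi => ?_) (fun i hi => ?_)
    (fun i hi => ?_) (fun i hi => ?_)
  all_goals simp only [Finset.coe_filter, Finset.mem_Ico, Set.mem_ofPred_eq] at hi ⊢
  · rw [reverseFlip_turn_iff R hi.1] at hi
    exact ⟨by omega, hi.2⟩
  · have hi' : 1 ≤ T - i ∧ T - i < T := by omega
    rw [reverseFlip_turn_iff R hi', Nat.sub_sub_self hi.1.2.le]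
    exact ⟨hi', hi.2⟩
  all_goals omega

lemma turnsOf_succ (T : ℕ) (R : Finset ℕ) :
    turnsOf (T + 1) R = turnsOf T R + if (T ∈ R ↔ T - 1 ∈ R) then 0 else 1 := by
  rcases T.eq_zero_or_pos with rfl | hT
  · simp [turnsOf]
  · rw [turnsOf, turnsOf, Nat.Ico_succ_right_eq_insert_Ico hT, Finset.filter_insert]
    split_ifs <;> simp_all

lemma even_turnsOf_iff (T : ℕ) (R : Finset ℕ) : Even (turnsOf T R) ↔ (0 ∈ R ↔ T - 1 ∈ R) := by
  induction T with
  | zero => simp [turnsOf]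
  | succ T ih =>
    rw [turnsOf_succ, Nat.add_sub_cancel]
    split_ifs with h
    · rw [add_zero, ih, h]
    · rw [Nat.even_add_one, ih]; tauto

lemma im_neg_I_mul_pow_of_even (μ : ℝ) {n : ℕ} (hn : Even n) : ((-I * μ) ^ n).im = 0 := by
  obtain ⟨k, rfl⟩ := hn
  rw [← two_mul, pow_mul, mul_pow, neg_sq, I_sq, neg_one_mul, ← ofReal_pow, ← ofReal_neg,
    ← ofReal_pow, ofReal_im]

def pathWeight (X : ℤ) (T : ℕ) (μ : ℝ) (R : Finset ℕ) : ℂ :=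
  if 0 ∈ R ∧ 2 * (R.card : ℤ) - (T : ℤ) = X then (-I * (μ : ℂ)) ^ turnsOf T R else 0

lemma im_pathWeight_reverseFlip (X : ℤ) (T : ℕ) (μ : ℝ) {R : Finset ℕ}
    (hR : R ⊆ Finset.range T) :
    (pathWeight X T μ R).im = (pathWeight (-X) T μ (reverseFlip T R)).im := by
  unfold pathWeight
  rw [turnsOf_reverseFlip]
  by_cases heven : Even (turnsOf T R)
  · simp only [apply_ite im, im_neg_I_mul_pow_of_even μ heven, zero_im, ite_self]
  -- odd turns: first and last moves of `R` differ; the flipped path starts with the swapped last one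
  have hfirst : 0 ∈ R ↔ 0 ∈ reverseFlip T R := by
    rw [even_turnsOf_iff] at heven
    rcases T.eq_zero_or_pos with rfl | hT
    · exact absurd Iff.rfl heven
    rw [mem_reverseFlip, Nat.sub_zero]
    tauto
  have hend : 2 * (R.card : ℤ) - T = X ↔ 2 * ((reverseFlip T R).card : ℤ) - T = -X := by
    have := Finset.card_le_card hR
    rw [Finset.card_range] at this
    rw [card_reverseFlip hR]
    omega
  rw [if_congr (and_congr hfirst hend) rfl rfl]

lemma im_sum_pathWeight_neg (X : ℤ) (T : ℕ) (μ : ℝ) :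
    (∑ R ∈ (Finset.range T).powerset, pathWeight X T μ R).im =
      (∑ R ∈ (Finset.range T).powerset, pathWeight (-X) T μ R).im := by
  rw [im_sum, im_sum]
  refine Finset.sum_nbij' (reverseFlip T) (reverseFlip T) (fun R _ => ?_) (fun R _ => ?_)
    (fun R hR => ?_) (fun R hR => ?_) (fun R hR => ?_)
  · exact Finset.mem_powerset.mpr (reverseFlip_subset T R)
  · exact Finset.mem_powerset.mpr (reverseFlip_subset T R)
  · exact reverseFlip_reverseFlip (Finset.mem_powerset.mp hR)
  · exact reverseFlip_reverseFlip (Finset.mem_powerset.mp hR)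
  · exact im_pathWeight_reverseFlip X T μ (Finset.mem_powerset.mp hR)

lemma re_waveA_neg (X : ℤ) (T : ℕ) (μ : ℝ) : (waveA (-X) T μ).re = (waveA X T μ).re := by
  change (_ * I * ∑ R ∈ (Finset.range T).powerset, pathWeight (-X) T μ R).re =
    (_ * I * ∑ R ∈ (Finset.range T).powerset, pathWeight X T μ R).re
  rw [mul_assoc, mul_assoc, re_ofReal_mul, re_ofReal_mul, I_mul_re, I_mul_re,
    im_sum_pathWeight_neg (-X), neg_neg]

theorem stmt15_general (m ε : ℝ) (hε : 0 < ε) (X T : ℤ) :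
    a1 ((X : ℝ) * ε) ((T : ℝ) * ε) m ε = a1 (-((X : ℝ) * ε)) ((T : ℝ) * ε) m ε := by
  have hX : ⌊(X : ℝ) * ε / ε⌋ = X := by rw [mul_div_cancel_right₀ _ hε.ne', Int.floor_intCast]
  have hnegX : ⌊-((X : ℝ) * ε) / ε⌋ = -X := by
    rw [neg_div, mul_div_cancel_right₀ _ hε.ne', ← Int.cast_neg, Int.floor_intCast]
  simp only [a1, wf, hX, hnegX]
  exact (re_waveA_neg X _ _).symm

theorem stmt15 (m ε : ℝ) (hm : 0 ≤ m) (hε : 0 < ε) (X T : ℤ) (hT : (0 : ℝ) ≤ (T : ℝ) * ε) :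
    a1 ((X : ℝ) * ε) ((T : ℝ) * ε) m ε = a1 (-((X : ℝ) * ε)) ((T : ℝ) * ε) m ε :=
  stmt15_general m ε hε X T
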